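/- Consider a min-cost flow instance whose edge costs c_e ∈ [0,1] are independent random variables, each having a probability density function bounded from above by φ, and suppose at least two feasible integer flows exist. Let f* be a min-cost feasible integer flow and let Δ be the minimum cost of a directed cycle in the residual network of f*. Then for every ε > 0, the probability that Δ ≤ ε is at most 2εφm. -/

import Mathlib

open MeasureTheory

/-- A feasible integer flow: capacity constraints and budget (flow conservation)
constraints. -/
def IsFlow {V E : Type} [Fintype E] [DecidableEq V]
    (src tgt : E → V) (cap : E → ℕ) (bdg : V → ℤ) (f : E → ℤ) : Prop :=
  (∀ e, 0 ≤ f e ∧ f e ≤ (cap e : ℤ)) ∧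
  ∀ v, ((∑ e, if src e = v then f e else 0) - (∑ e, if tgt e = v then f e else 0)) = bdg v

/-- The cost `c · f` of an integer flow. -/
noncomputable def flowCost {E : Type} [Fintype E] (c : E → ℝ) (f : E → ℤ) : ℝ :=
  ∑ e, c e * (f e : ℝ)

/-- A residual arc is an edge together with a direction: `(e, true)` is the forward
copy of `e` and `(e, false)` the backward copy. This is the source of the arc. -/
def arcSrc {V E : Type} (src tgt : E → V) : E × Bool → V
  | (e, true) => src e
  | (e, false) => tgt e

/-- The target of a residual arc. -/
def arcTgt {V E : Type} (src tgt : E → V) : E × Bool → V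
  | (e, true) => tgt e
  | (e, false) => src e

/-- A residual arc exists in the residual network of the flow `f`: a forward arc of `e`
needs `f e < u e` and a backward arc needs `f e > 0`. -/
def arcValid {E : Type} (cap : E → ℕ) (f : E → ℤ) : E × Bool → Prop
  | (e, true) => f e < (cap e : ℤ)
  | (e, false) => 0 < f e

/-- The cost of a residual arc: `c e` for the forward and `-c e` for the backward copy. -/
def arcCost {E : Type} (c : E → ℝ) : E × Bool → ℝ
  | (e, true) => c e
  | (e, false) => - c e

/-- A (simple) directed cycle in the residual network of the flow `f`, given by its
distinct vertices `vtx 0, …, vtx (len-1)` and arcs `arc i : vtx i → vtx (i+1)`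
(indices cyclically); no edge of the graph is used in both directions. -/
def IsResidualCycle {V E : Type} (src tgt : E → V) (cap : E → ℕ) (f : E → ℤ)
    {len : ℕ} (vtx : Fin len → V) (arc : Fin len → E × Bool) : Prop :=
  0 < len ∧ Function.Injective vtx ∧
  (∀ i, arcValid cap f (arc i) ∧ arcSrc src tgt (arc i) = vtx i ∧
    arcTgt src tgt (arc i) = vtx ⟨((i : ℕ) + 1) % len, Nat.mod_lt _ i.pos⟩) ∧
  (∀ i j, (arc i).1 = (arc j).1 → (arc i).2 = (arc j).2)

open scoped Classical in
/-- Augmenting the flow `f` by one unit of flow along a cycle given by its arcs: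
increase `f e` by one for every forward arc of `e` on the cycle and decrease it by one
for every backward arc on the cycle. -/
noncomputable def augment {E : Type} {len : ℕ} (f : E → ℤ) (arc : Fin len → E × Bool) :
    E → ℤ :=
  fun e => f e + (if ∃ i, arc i = (e, true) then 1 else 0)
    - (if ∃ i, arc i = (e, false) then 1 else 0)

/-- The cost of a residual cycle: the sum of the costs of its arcs. -/
noncomputable def cycleCost {E : Type} {len : ℕ} (c : E → ℝ) (arc : Fin len → E × Bool) : ℝ :=
  ∑ i, arcCost c (arc i)

/-!
Fix every cost except `c d`. A flow `f` costs `restCost d c f + f d * c d`, and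
`minRestCost d k`, the least `restCost` of a flow with `f d = k`, does not depend on `c d`.
If a min-cost flow has `f d = k` and some flow with value `k + 1` (or `k - 1`) at `d` is
within `ε` of the optimum, then `c d` lies in an interval of length `ε` whose endpoints are
determined by the other costs; by the density bound this has probability at most `φ ε`.

So it suffices to find such a pair with `k ∈ {0, u_d}` moving away from the capacity bound,
which gives `2m` intervals. Let `f` be the lexicographically smallest min-cost flow and `h ≠ f`
a flow of cost at most `opt + ε` (augment along the residual cycle). Walking along arcs that
carry positive flow of `h - f` yields a `±1`-valued cycle `χ` conformal to `h - f`; then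
`f + χ` and `h - χ` are flows, so `f + χ` is within `ε` of the optimum. If `f - χ` is not a
flow, `χ` leaves the capacity box of `f` at some edge `d`, and `f`, `f + χ`, `d` is the pair.
Otherwise `χ` has cost `0`, so `f + χ` and `f - χ` are both optimal, contradicting the
lexicographic choice of `f`.
-/

open Finset
open scoped ENNReal

theorem Function.exists_mem_periodicPts {α : Type*} [Finite α] [Nonempty α] (f : α → α) :
    ∃ x, x ∈ Function.periodicPts f := by
  obtain ⟨x⟩ := ‹Nonempty α›
  obtain ⟨m, k, hmk, heq⟩ := Finite.exists_ne_map_eq_of_infinite (f^[·] x)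
  wlog hlt : m < k generalizing m k
  · exact this k m hmk.symm heq.symm (by omega)
  refine ⟨f^[m] x, Function.mk_mem_periodicPts (Nat.sub_pos_of_lt hlt) ?_⟩
  rw [Function.IsPeriodicPt, Function.IsFixedPt, ← Function.iterate_add_apply,
    Nat.sub_add_cancel hlt.le]
  exact heq.symm

theorem val_finRotate {n : ℕ} (i : Fin n) : (finRotate n i : ℕ) = (i + 1) % n := by
  have := i.neZero
  simp [Fin.val_add]

section Arcs

variable {E : Type}

def arcSign (b : Bool) : ℤ := if b then 1 else -1

def arcFlow (z : E → ℤ) (a : E × Bool) : ℤ := arcSign a.2 * z a.1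

@[simp] theorem arcFlow_true (z : E → ℤ) (e : E) : arcFlow z (e, true) = z e := by
  simp [arcFlow, arcSign]

@[simp] theorem arcFlow_false (z : E → ℤ) (e : E) : arcFlow z (e, false) = -z e := by
  simp [arcFlow, arcSign]

theorem eq_of_arcFlow_pos {z : E → ℤ} {a b : E × Bool} (ha : 0 < arcFlow z a)
    (hb : 0 < arcFlow z b) (hab : a.1 = b.1) : a = b := by
  obtain ⟨e, _ | _⟩ := a <;> obtain ⟨e', _ | _⟩ := b <;> simp_all <;> omega

variable [DecidableEq E]

def arcVec (a : E × Bool) : E → ℤ := Pi.single a.1 (arcSign a.2)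

def cycleVec {n : ℕ} (arcs : Fin n → E × Bool) : E → ℤ := ∑ i, arcVec (arcs i)

variable {n : ℕ} {arcs : Fin n → E × Bool}

theorem cycleVec_apply_fst (hinj : Function.Injective (Prod.fst ∘ arcs)) (i : Fin n) :
    cycleVec arcs (arcs i).1 = arcSign (arcs i).2 := by
  rw [cycleVec, Finset.sum_apply, sum_eq_single i (fun j _ hji => ?_) (by simp)]
  · simp [arcVec]
  · exact Pi.single_eq_of_ne (fun h : (arcs i).1 = (arcs j).1 => hji (hinj h.symm)) _

theorem cycleVec_apply_of_forall_ne {e : E} (he : ∀ i, (arcs i).1 ≠ e) :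
    cycleVec arcs e = 0 := by
  rw [cycleVec, Finset.sum_apply]
  exact sum_eq_zero fun i _ => by exact Pi.single_eq_of_ne (he i).symm _

theorem cycleVec_apply (hinj : Function.Injective (Prod.fst ∘ arcs)) (e : E) :
    cycleVec arcs e =
      (if ∃ i, arcs i = (e, true) then 1 else 0) - if ∃ i, arcs i = (e, false) then 1 else 0 := by
  by_cases he : ∃ i, (arcs i).1 = e
  · obtain ⟨i, rfl⟩ := he
    generalize hb : (arcs i).2 = b
    have hdir : ∀ b', (∃ j, arcs j = ((arcs i).1, b')) ↔ b = b' := fun b' =>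
      ⟨fun ⟨j, hj⟩ => by
        have hfst : (arcs j).1 = (arcs i).1 := by rw [hj]
        obtain rfl := hinj hfst
        rw [← hb, hj], fun hb' => ⟨i, by rw [← hb', ← hb]⟩⟩
    rw [cycleVec_apply_fst hinj, hb]
    simp only [hdir]
    cases b <;> simp [arcSign]
  · have hne : ∀ i, (arcs i).1 ≠ e := fun i hi => he ⟨i, hi⟩
    have hnex : ∀ b, ¬∃ i, arcs i = (e, b) := fun b ⟨i, hi⟩ => hne i (by rw [hi])
    simp [cycleVec_apply_of_forall_ne hne, hnex]

theorem cycleVec_ne_zero (hinj : Function.Injective (Prod.fst ∘ arcs)) (hn : 0 < n) :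
    cycleVec arcs ≠ 0 := fun h => by
  have := cycleVec_apply_fst hinj ⟨0, hn⟩
  rw [h] at this
  cases h : (arcs ⟨0, hn⟩).2 <;> simp [h, arcSign] at this

theorem augment_eq_add_cycleVec (f : E → ℤ) (hinj : Function.Injective (Prod.fst ∘ arcs)) :
    augment f arcs = f + cycleVec arcs := by
  ext e
  simp only [augment, Pi.add_apply, cycleVec_apply hinj]
  split_ifs <;> ring

end Arcs

section Divergence

variable {V E : Type} [Fintype E] [DecidableEq V] (src tgt : E → V)

def divergence : (E → ℤ) →+ (V → ℤ) :=
  AddMonoidHom.mk'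
    (fun f v => (∑ e, if src e = v then f e else 0) - ∑ e, if tgt e = v then f e else 0)
    (fun f g => by ext v; simp only [Pi.add_apply, ite_add_zero, sum_add_distrib]; ring)

theorem isFlow_iff {cap : E → ℕ} {bdg : V → ℤ} {f : E → ℤ} :
    IsFlow src tgt cap bdg f ↔
      (∀ e, 0 ≤ f e ∧ f e ≤ cap e) ∧ divergence src tgt f = bdg :=
  and_congr_right fun _ => funext_iff.symm

theorem IsFlow.divergence_eq {src tgt : E → V} {cap : E → ℕ} {bdg : V → ℤ} {f : E → ℤ}
    (hf : IsFlow src tgt cap bdg f) : divergence src tgt f = bdg :=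
  ((isFlow_iff src tgt).1 hf).2

theorem divergence_apply_eq_sum_arcFlow (z : E → ℤ) (v : V) :
    divergence src tgt z v = ∑ a, if arcSrc src tgt a = v then arcFlow z a else 0 := by
  simp only [Fintype.sum_prod_type, Fintype.sum_bool, arcSrc, arcFlow, arcSign]
  simp [divergence, sum_add_distrib, apply_ite Neg.neg, sub_eq_add_neg, ← sum_neg_distrib]

theorem exists_arcFlow_pos_of_divergence_eq_zero {z : E → ℤ} (hz : divergence src tgt z = 0)
    {a : E × Bool} (ha : 0 < arcFlow z a) :
    ∃ b, 0 < arcFlow z b ∧ arcSrc src tgt b = arcTgt src tgt a := by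
  by_contra! hout
  -- the reverse of `a` leaves `arcTgt a` carrying negative flow, all others nonpositive
  have hrev : arcSrc src tgt (a.1, !a.2) = arcTgt src tgt a ∧ arcFlow z (a.1, !a.2) < 0 := by
    obtain ⟨e, _ | _⟩ := a <;> simp_all [arcSrc, arcTgt, arcFlow, arcSign]
  have hneg : divergence src tgt z (arcTgt src tgt a) < 0 := by
    rw [divergence_apply_eq_sum_arcFlow]
    refine (sum_lt_sum (g := fun _ => 0) (fun b _ => ?_)
      ⟨(a.1, !a.2), mem_univ _, by simp [hrev.1, hrev.2]⟩).trans_eq sum_const_zero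
    split_ifs with hb
    exacts [not_lt.1 fun hpos => hout b hpos hb, le_rfl]
  simp [hz] at hneg

variable [DecidableEq E]

theorem divergence_single (e : E) (x : ℤ) :
    divergence src tgt (Pi.single e x) =
      Pi.single (src e) x - Pi.single (tgt e) x := by
  ext v
  simp only [divergence, AddMonoidHom.mk'_apply, Pi.sub_apply, Pi.single_apply]
  rw [Fintype.sum_eq_single e fun x hx => by simp [hx],
    Fintype.sum_eq_single e fun x hx => by simp [hx]]
  simp [eq_comm]

theorem divergence_arcVec (a : E × Bool) :
    divergence src tgt (arcVec a) =
      Pi.single (arcSrc src tgt a) 1 - Pi.single (arcTgt src tgt a) 1 := by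
  obtain ⟨e, _ | _⟩ := a <;>
    simp [arcVec, arcSign, arcSrc, arcTgt, divergence_single, Pi.single_neg]

theorem divergence_cycleVec {n : ℕ} {arcs : Fin n → E × Bool}
    (hclosed : ∀ i, arcTgt src tgt (arcs i) = arcSrc src tgt (arcs (finRotate n i))) :
    divergence src tgt (cycleVec arcs) = 0 := by
  simp only [cycleVec, map_sum, divergence_arcVec, sum_sub_distrib, hclosed]
  rw [Equiv.sum_comp (finRotate n) fun i => (Pi.single (arcSrc src tgt (arcs i)) 1 : V → ℤ),
    sub_self]

end Divergence

section FlowCost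

variable {E : Type} [Fintype E] (c : E → ℝ)

theorem flowCost_add (f g : E → ℤ) : flowCost c (f + g) = flowCost c f + flowCost c g := by
  simp [flowCost, mul_add, sum_add_distrib]

theorem flowCost_sub (f g : E → ℤ) : flowCost c (f - g) = flowCost c f - flowCost c g := by
  simp [flowCost, mul_sub, sum_sub_distrib]

theorem flowCost_sum {ι : Type*} (s : Finset ι) (g : ι → E → ℤ) :
    flowCost c (∑ i ∈ s, g i) = ∑ i ∈ s, flowCost c (g i) := by
  simp only [flowCost, Finset.sum_apply, Int.cast_sum, Finset.mul_sum]
  exact Finset.sum_comm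

variable [DecidableEq E]

theorem flowCost_arcVec (a : E × Bool) : flowCost c (arcVec a) = arcCost c a := by
  obtain ⟨e, _ | _⟩ := a <;> simp [flowCost, arcVec, arcSign, arcCost, Pi.single_apply]

theorem flowCost_cycleVec {n : ℕ} (arcs : Fin n → E × Bool) :
    flowCost c (cycleVec arcs) = cycleCost c arcs := by
  simp only [cycleVec, flowCost_sum, flowCost_arcVec, cycleCost]

end FlowCost

section ResidualCycles

variable {V E : Type} {src tgt : E → V} {cap : E → ℕ} {bdg : V → ℤ} {f : E → ℤ} {n : ℕ}
  {vtx : Fin n → V} {arcs : Fin n → E × Bool}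

theorem IsResidualCycle.closed (h : IsResidualCycle src tgt cap f vtx arcs) (i : Fin n) :
    arcTgt src tgt (arcs i) = arcSrc src tgt (arcs (finRotate n i)) := by
  obtain ⟨-, -, harc, -⟩ := h
  rw [(harc i).2.2, (harc _).2.1]
  exact congrArg vtx (Fin.ext (val_finRotate i).symm)

theorem IsResidualCycle.injective_fst (h : IsResidualCycle src tgt cap f vtx arcs) :
    Function.Injective (Prod.fst ∘ arcs) := by
  obtain ⟨-, hvtx, harc, hdir⟩ := h
  intro i j hij
  apply hvtx
  rw [← (harc i).2.1, ← (harc j).2.1, Prod.ext hij (hdir i j hij)]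

variable [DecidableEq E]

theorem IsResidualCycle.augment_ne (hc : IsResidualCycle src tgt cap f vtx arcs) :
    augment f arcs ≠ f := by
  rw [augment_eq_add_cycleVec f hc.injective_fst, Ne, add_eq_left]
  exact cycleVec_ne_zero hc.injective_fst hc.1

variable [Fintype E]

theorem IsResidualCycle.flowCost_augment (hc : IsResidualCycle src tgt cap f vtx arcs)
    (c : E → ℝ) : flowCost c (augment f arcs) = flowCost c f + cycleCost c arcs := by
  rw [augment_eq_add_cycleVec f hc.injective_fst, flowCost_add, flowCost_cycleVec]

variable [DecidableEq V]

theorem IsResidualCycle.isFlow_augment (hc : IsResidualCycle src tgt cap f vtx arcs)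
    (hf : IsFlow src tgt cap bdg f) : IsFlow src tgt cap bdg (augment f arcs) := by
  rw [isFlow_iff] at hf ⊢
  rw [augment_eq_add_cycleVec f hc.injective_fst]
  refine ⟨fun e => ?_, by rw [map_add, divergence_cycleVec src tgt hc.closed, add_zero, hf.2]⟩
  have hvalid : ∀ b, (∃ i, arcs i = (e, b)) → arcValid cap f (e, b) :=
    fun b ⟨i, hi⟩ => hi ▸ (hc.2.2.1 i).1
  have hcap := hf.1 e
  rw [Pi.add_apply, cycleVec_apply hc.injective_fst]
  split_ifs with h₁ h₂ h₂
  · omega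
  · have : f e < cap e := hvalid true h₁
    omega
  · have : 0 < f e := hvalid false h₂
    omega
  · omega

end ResidualCycles

def IsUnitConformal {E : Type} (χ z : E → ℤ) : Prop :=
  ∀ e, χ e = 0 ∨ (χ e = 1 ∧ 0 < z e) ∨ (χ e = -1 ∧ z e < 0)

theorem exists_unitConformal_circulation {V E : Type} [Fintype E] [DecidableEq V]
    [DecidableEq E] (src tgt : E → V) {z : E → ℤ} (hz : divergence src tgt z = 0) (hz0 : z ≠ 0) :
    ∃ χ, divergence src tgt χ = 0 ∧ χ ≠ 0 ∧ IsUnitConformal χ z := by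
  obtain ⟨e₀, he₀⟩ : ∃ e, z e ≠ 0 := Function.ne_iff.1 hz0
  let P := {a : E × Bool // 0 < arcFlow z a}
  have : Nonempty P := by
    rcases he₀.lt_or_gt with h | h
    exacts [⟨⟨(e₀, false), by simpa using h⟩⟩, ⟨⟨(e₀, true), by simpa using h⟩⟩]
  choose nxt hnxt using fun a : P => exists_arcFlow_pos_of_divergence_eq_zero src tgt hz a.2
  let next : P → P := fun a => ⟨nxt a, (hnxt a).1⟩
  obtain ⟨b, hb⟩ := Function.exists_mem_periodicPts next
  let arcs : Fin (Function.minimalPeriod next b) → E × Bool := fun i => (next^[i] b).1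
  have hpos : ∀ i, 0 < arcFlow z (arcs i) := fun i => (next^[i] b).2
  have hclosed : ∀ i, arcTgt src tgt (arcs i) = arcSrc src tgt (arcs (finRotate _ i)) := by
    intro i
    simp only [arcs, val_finRotate, Function.iterate_mod_minimalPeriod_eq,
      Function.iterate_succ_apply']
    exact (hnxt _).2.symm
  -- positive arcs on the same edge coincide, and the orbit of `b` visits distinct points
  have hinj : Function.Injective (Prod.fst ∘ arcs) := fun i j hij =>
    Fin.ext <| Function.iterate_injOn_Iio_minimalPeriod i.2 j.2 <|
      Subtype.ext (eq_of_arcFlow_pos (hpos i) (hpos j) hij)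
  refine ⟨cycleVec arcs, divergence_cycleVec src tgt hclosed,
    cycleVec_ne_zero hinj (Function.minimalPeriod_pos_of_mem_periodicPts hb), fun e => ?_⟩
  have hfwd : (∃ i, arcs i = (e, true)) → 0 < z e := fun ⟨i, hi⟩ => by
    simpa [hi] using hpos i
  have hbwd : (∃ i, arcs i = (e, false)) → z e < 0 := fun ⟨i, hi⟩ => by
    simpa [hi] using hpos i
  rw [cycleVec_apply hinj]
  split_ifs with h₁ h₂ h₂
  · exact absurd (hfwd h₁) (hbwd h₂).not_gt
  · exact Or.inr (Or.inl ⟨rfl, hfwd h₁⟩)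
  · exact Or.inr (Or.inr ⟨rfl, hbwd h₂⟩)
  · exact Or.inl rfl

section MinCostFlows

variable {V E : Type} [Fintype E] [DecidableEq V] {src tgt : E → V} {cap : E → ℕ}
  {bdg : V → ℤ} {c : E → ℝ}

def IsMinCostFlow (src tgt : E → V) (cap : E → ℕ) (bdg : V → ℤ) (c : E → ℝ) (f : E → ℤ) :
    Prop :=
  IsFlow src tgt cap bdg f ∧ ∀ g, IsFlow src tgt cap bdg g → flowCost c f ≤ flowCost c g

theorem finite_setOf_isFlow (src tgt : E → V) (cap : E → ℕ) (bdg : V → ℤ) :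
    {f | IsFlow src tgt cap bdg f}.Finite := by
  classical
  exact (Set.finite_Icc (0 : E → ℤ) fun e => (cap e : ℤ)).subset
    fun f hf => ⟨fun e => (hf.1 e).1, fun e => (hf.1 e).2⟩

theorem IsFlow.add_sub_of_isUnitConformal {f h χ : E → ℤ} (hf : IsFlow src tgt cap bdg f)
    (hh : IsFlow src tgt cap bdg h) (hχ : divergence src tgt χ = 0)
    (hconf : IsUnitConformal χ (h - f)) :
    IsFlow src tgt cap bdg (f + χ) ∧ IsFlow src tgt cap bdg (h - χ) := by
  simp only [isFlow_iff, map_add, map_sub, hχ, hf.divergence_eq, hh.divergence_eq, add_zero,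
    sub_zero, and_true, Pi.add_apply, Pi.sub_apply]
  have hbounds : ∀ e, 0 ≤ f e ∧ f e ≤ cap e ∧ 0 ≤ h e ∧ h e ≤ cap e ∧
      (χ e = 0 ∨ (χ e = 1 ∧ 0 < h e - f e) ∨ (χ e = -1 ∧ h e - f e < 0)) := fun e =>
    ⟨(hf.1 e).1, (hf.1 e).2, (hh.1 e).1, (hh.1 e).2, hconf e⟩
  constructor <;> intro e <;> have := hbounds e <;> omega

theorem IsFlow.sub_or_exists_boundary {f χ : E → ℤ} (hf : IsFlow src tgt cap bdg f)
    (hχ : divergence src tgt χ = 0) (hunit : ∀ e, χ e = 0 ∨ χ e = 1 ∨ χ e = -1) :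
    IsFlow src tgt cap bdg (f - χ) ∨
      ∃ d, (χ d = 1 ∧ f d = 0) ∨ (χ d = -1 ∧ f d = cap d) := by
  by_contra! hno
  apply hno.1
  simp only [isFlow_iff, map_sub, hχ, hf.divergence_eq, sub_zero, and_true, Pi.sub_apply]
  intro e
  have := hf.1 e
  rcases hunit e with h | h | h <;> rw [h]
  · omega
  · have := (hno.2 e).1 h
    omega
  · have := (hno.2 e).2 h
    omega

theorem IsMinCostFlow.add_and_sub {f χ : E → ℤ} (hf : IsMinCostFlow src tgt cap bdg c f)
    (hadd : IsFlow src tgt cap bdg (f + χ)) (hsub : IsFlow src tgt cap bdg (f - χ)) :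
    IsMinCostFlow src tgt cap bdg c (f + χ) ∧ IsMinCostFlow src tgt cap bdg c (f - χ) := by
  have h₁ := hf.2 _ hadd
  have h₂ := hf.2 _ hsub
  rw [flowCost_add] at h₁
  rw [flowCost_sub] at h₂
  refine ⟨⟨hadd, fun g hg => ?_⟩, ⟨hsub, fun g hg => ?_⟩⟩ <;>
    linarith [hf.2 g hg, flowCost_add c f χ, flowCost_sub c f χ]

theorem eq_zero_of_toLex_le_add_of_toLex_le_sub [LinearOrder E] {f χ : E → ℤ}
    (hadd : toLex f ≤ toLex (f + χ)) (hsub : toLex f ≤ toLex (f - χ)) : χ = 0 := by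
  rw [toLex_add, le_add_iff_nonneg_right] at hadd
  rw [toLex_sub, le_sub_self_iff] at hsub
  exact toLex.injective (le_antisymm hsub hadd)

theorem IsMinCostFlow.exists_ne_flowCost_le {fs f : E → ℤ} {n : ℕ} {vtx : Fin n → V}
    {arcs : Fin n → E × Bool} {ε : ℝ} (hfs : IsMinCostFlow src tgt cap bdg c fs)
    (hc : IsResidualCycle src tgt cap fs vtx arcs) (hcost : cycleCost c arcs ≤ ε)
    (hf : IsMinCostFlow src tgt cap bdg c f) :
    ∃ h, IsFlow src tgt cap bdg h ∧ h ≠ f ∧ flowCost c h ≤ flowCost c f + ε := by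
  classical
  have hopt : flowCost c fs = flowCost c f := le_antisymm (hfs.2 f hf.1) (hf.2 fs hfs.1)
  have hε : 0 ≤ ε := by
    have := hfs.2 _ (hc.isFlow_augment hfs.1)
    rw [hc.flowCost_augment] at this
    linarith
  by_cases hfsf : fs = f
  · subst hfsf
    exact ⟨augment fs arcs, hc.isFlow_augment hfs.1, hc.augment_ne,
      by rw [hc.flowCost_augment]; linarith⟩
  · exact ⟨fs, hfs.1, hfsf, by linarith⟩

theorem IsMinCostFlow.exists_unit_step_off_bound {fs : E → ℤ} {n : ℕ} {vtx : Fin n → V}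
    {arcs : Fin n → E × Bool} {ε : ℝ} (hfs : IsMinCostFlow src tgt cap bdg c fs)
    (hc : IsResidualCycle src tgt cap fs vtx arcs) (hcost : cycleCost c arcs ≤ ε) :
    ∃ f h d, IsMinCostFlow src tgt cap bdg c f ∧ IsFlow src tgt cap bdg h ∧
      flowCost c h ≤ flowCost c f + ε ∧
      ((f d = 0 ∧ h d = 1) ∨ (f d = cap d ∧ h d = cap d - 1)) := by
  classical
  let : LinearOrder E := LinearOrder.lift' _ (Fintype.equivFin E).injective
  obtain ⟨f, hf, hflex⟩ := Set.exists_min_image {f | IsMinCostFlow src tgt cap bdg c f} toLex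
    ((finite_setOf_isFlow src tgt cap bdg).subset fun _ hf => hf.1) ⟨fs, hfs⟩
  obtain ⟨h, hh, hhf, hhcost⟩ := hfs.exists_ne_flowCost_le hc hcost hf
  obtain ⟨χ, hχ, hχ0, hconf⟩ := exists_unitConformal_circulation src tgt (z := h - f)
    (by rw [map_sub, hh.divergence_eq, hf.1.divergence_eq, sub_self]) (sub_ne_zero.2 hhf)
  obtain ⟨hadd, hsub⟩ := hf.1.add_sub_of_isUnitConformal hh hχ hconf
  have hunit : ∀ e, χ e = 0 ∨ χ e = 1 ∨ χ e = -1 := fun e => by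
    rcases hconf e with h | h | h <;> simp [h]
  rcases hf.1.sub_or_exists_boundary hχ hunit with hsub' | ⟨d, hd⟩
  · obtain ⟨hadd_opt, hsub_opt⟩ := hf.add_and_sub hadd hsub'
    exact absurd (eq_zero_of_toLex_le_add_of_toLex_le_sub (hflex _ hadd_opt) (hflex _ hsub_opt))
      hχ0
  · refine ⟨f, f + χ, d, hf, hadd, ?_, ?_⟩
    · have := hf.2 _ hsub
      rw [flowCost_sub] at this
      rw [flowCost_add]
      linarith
    · rcases hd with ⟨h1, h0⟩ | ⟨h1, h0⟩ <;> simp [h0, h1, sub_eq_add_neg]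

end MinCostFlows

section MinRestCost

variable {V E : Type} [Fintype E] [DecidableEq V] [DecidableEq E] (src tgt : E → V)
  (cap : E → ℕ) (bdg : V → ℤ)

def restCost (d : E) (c : E → ℝ) (f : E → ℤ) : ℝ :=
  ∑ e ∈ univ.erase d, c e * f e

theorem flowCost_eq_restCost_add (d : E) (c : E → ℝ) (f : E → ℤ) :
    flowCost c f = restCost d c f + c d * f d :=
  (add_sum_erase _ _ (mem_univ d)).symm.trans (add_comm _ _)

theorem restCost_update (d : E) (c : E → ℝ) (t : ℝ) (f : E → ℤ) :
    restCost d (Function.update c d t) f = restCost d c f :=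
  sum_congr rfl fun _ he => by rw [Function.update_of_ne (ne_of_mem_erase he)]

theorem measurable_restCost (d : E) (f : E → ℤ) : Measurable fun c => restCost d c f :=
  Finset.measurable_sum _ fun e _ => (measurable_pi_apply e).mul_const _

noncomputable def flowsAt (d : E) (k : ℤ) : Finset (E → ℤ) :=
  ((finite_setOf_isFlow src tgt cap bdg).subset (Set.sep_subset _ fun f => f d = k)).toFinset

omit [DecidableEq E] in
variable {src tgt cap bdg} in
theorem mem_flowsAt {d : E} {k : ℤ} {f : E → ℤ} :
    f ∈ flowsAt src tgt cap bdg d k ↔ IsFlow src tgt cap bdg f ∧ f d = k := by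
  simp [flowsAt]

noncomputable def minRestCost (d : E) (k : ℤ) (c : E → ℝ) : ℝ :=
  if hs : (flowsAt src tgt cap bdg d k).Nonempty then
    (flowsAt src tgt cap bdg d k).inf' hs (restCost d c)
  else 0

theorem measurable_minRestCost (d : E) (k : ℤ) :
    Measurable (minRestCost src tgt cap bdg d k) := by
  by_cases hs : (flowsAt src tgt cap bdg d k).Nonempty
  · unfold minRestCost
    simp only [dif_pos hs]
    convert Finset.inf'_induction hs _ (fun _ h₁ _ h₂ => h₁.inf h₂)
      fun f _ => measurable_restCost d f using 1
    exact funext fun c => by rw [Finset.inf'_apply]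
  · unfold minRestCost
    simp only [dif_neg hs, measurable_const]

theorem minRestCost_update (d : E) (k : ℤ) (c : E → ℝ) (t : ℝ) :
    minRestCost src tgt cap bdg d k (Function.update c d t) =
      minRestCost src tgt cap bdg d k c := by
  simp only [minRestCost, restCost_update]

variable {src tgt cap bdg}

theorem minRestCost_mem_Icc {c : E → ℝ} {f h : E → ℤ} {ε : ℝ}
    (hf : IsMinCostFlow src tgt cap bdg c f) (hh : IsFlow src tgt cap bdg h)
    (hcost : flowCost c h ≤ flowCost c f + ε) (d : E) :
    minRestCost src tgt cap bdg d (h d) c ∈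
      Set.Icc (flowCost c f - h d * c d) (flowCost c f - h d * c d + ε) := by
  have hmem : h ∈ flowsAt src tgt cap bdg d (h d) := mem_flowsAt.2 ⟨hh, rfl⟩
  rw [minRestCost, dif_pos ⟨h, hmem⟩]
  obtain ⟨g, hg, hgeq⟩ := exists_mem_eq_inf' ⟨h, hmem⟩ (restCost d c)
  rw [mem_flowsAt] at hg
  have hfg := hf.2 g hg.1
  have hle := inf'_le (restCost d c) hmem
  rw [flowCost_eq_restCost_add d c g, hg.2] at hfg
  rw [flowCost_eq_restCost_add d c h] at hcost
  constructor <;> linarith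

end MinRestCost

section CostGap

variable {V E : Type} [Fintype E] [DecidableEq V] [DecidableEq E] {src tgt : E → V}
  {cap : E → ℕ} {bdg : V → ℤ}

-- the value of `c d` at which the cheapest flows with `f d = k` and `f d = k + 1` cost the same
noncomputable def costGap (src tgt : E → V) (cap : E → ℕ) (bdg : V → ℤ) (d : E) (k : ℤ)
    (c : E → ℝ) : ℝ :=
  minRestCost src tgt cap bdg d k c - minRestCost src tgt cap bdg d (k + 1) c

theorem mem_Icc_costGap {c : E → ℝ} {f h : E → ℤ} {ε : ℝ} {d : E}
    (hf : IsMinCostFlow src tgt cap bdg c f) (hh : IsFlow src tgt cap bdg h)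
    (hcost : flowCost c h ≤ flowCost c f + ε)
    (hd : (f d = 0 ∧ h d = 1) ∨ (f d = cap d ∧ h d = cap d - 1)) :
    c d ∈ Set.Icc (costGap src tgt cap bdg d 0 c) (costGap src tgt cap bdg d 0 c + ε) ∨
      c d ∈ Set.Icc (costGap src tgt cap bdg d (cap d - 1) c - ε)
        (costGap src tgt cap bdg d (cap d - 1) c - ε + ε) := by
  have hf' := minRestCost_mem_Icc hf hf.1 (add_zero _).ge d
  have hh' := minRestCost_mem_Icc hf hh hcost d
  rcases hd with ⟨hf0, hh1⟩ | ⟨hfc, hhc⟩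
  · rw [hf0] at hf'
    rw [hh1] at hh'
    simp only [costGap, zero_add, Set.mem_Icc, Int.cast_zero, Int.cast_one] at hf' hh' ⊢
    left
    constructor <;> linarith
  · rw [hfc] at hf'
    rw [hhc] at hh'
    simp only [costGap, sub_add_cancel, Set.mem_Icc, Int.cast_sub, Int.cast_one,
      Int.cast_natCast] at hf' hh' ⊢
    right
    constructor <;> linarith

end CostGap

theorem measure_pi_setOf_mem_Icc_le {ι : Type*} [Fintype ι] [DecidableEq ι]
    (μ : ι → Measure ℝ) [∀ i, IsProbabilityMeasure (μ i)] {d : ι} {Θ : (ι → ℝ) → ℝ}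
    (hΘ : Measurable Θ) (hΘd : ∀ x t, Θ (Function.update x d t) = Θ x) {ε : ℝ} {K : ℝ≥0∞}
    (hK : ∀ r, μ d (Set.Icc r (r + ε)) ≤ K) :
    Measure.pi μ {c | c d ∈ Set.Icc (Θ c) (Θ c + ε)} ≤ K := by
  set S := {c : ι → ℝ | c d ∈ Set.Icc (Θ c) (Θ c + ε)}
  have hS : MeasurableSet S := (measurableSet_le hΘ (measurable_pi_apply d)).inter
    (measurableSet_le (measurable_pi_apply d) (hΘ.add_const ε))
  have hsection : ∀ x, (fun t => S.indicator 1 (Function.update x d t)) =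
      (Set.Icc (Θ x) (Θ x + ε)).indicator (1 : ℝ → ℝ≥0∞) := fun x => by
    ext t
    simp [S, Set.indicator_apply, hΘd]
  rw [← lintegral_indicator_one hS, lintegral_eq_lmarginal_univ 0,
    lmarginal_erase' _ (measurable_one.indicator hS) (mem_univ d)]
  calc _ ≤ (∫⋯∫⁻_univ.erase d, fun _ => K ∂μ) 0 := lmarginal_mono (fun x => ?_) 0
    _ = K := by simp [lmarginal]
  simp only [hsection, lintegral_indicator_one measurableSet_Icc]
  exact hK _

theorem withDensity_Icc_le {g : ℝ → ℝ≥0∞} {φ : ℝ} (hg : ∀ x, g x ≤ ENNReal.ofReal φ)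
    (r ε : ℝ) :
    volume.withDensity g (Set.Icc r (r + ε)) ≤ ENNReal.ofReal φ * ENNReal.ofReal ε := by
  rw [withDensity_apply _ measurableSet_Icc]
  calc ∫⁻ x in Set.Icc r (r + ε), g x ≤ ∫⁻ _ in Set.Icc r (r + ε), ENNReal.ofReal φ :=
        lintegral_mono hg
    _ = _ := by rw [setLIntegral_const, Real.volume_Icc, add_sub_cancel_left]

theorem residual_cycle_prob_general
    {V E : Type} [Fintype E] [DecidableEq V]
    (src tgt : E → V) (cap : E → ℕ) (bdg : V → ℤ)
    (φ ε : ℝ) (hε : 0 < ε)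
    (g : E → ℝ → ENNReal)
    (hgbound : ∀ e x, g e x ≤ ENNReal.ofReal φ)
    (hgprob : ∀ e, IsProbabilityMeasure ((volume : Measure ℝ).withDensity (g e))) :
    Measure.pi (fun e : E => (volume : Measure ℝ).withDensity (g e))
      {c : E → ℝ | ∃ fstar : E → ℤ,
        IsFlow src tgt cap bdg fstar ∧
        (∀ f, IsFlow src tgt cap bdg f → flowCost c fstar ≤ flowCost c f) ∧
        ∃ (len : ℕ) (vtx : Fin len → V) (arc : Fin len → E × Bool),
          IsResidualCycle src tgt cap fstar vtx arc ∧ cycleCost c arc ≤ ε} ≤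
      ENNReal.ofReal (2 * ε * φ * (Fintype.card E)) := by
  classical
  have := hgprob
  set μ := fun e : E => (volume : Measure ℝ).withDensity (g e)
  set θ := costGap src tgt cap bdg
  have hslab : ∀ d (Θ : (E → ℝ) → ℝ), Measurable Θ →
      (∀ x t, Θ (Function.update x d t) = Θ x) →
      Measure.pi μ {c | c d ∈ Set.Icc (Θ c) (Θ c + ε)} ≤ ENNReal.ofReal φ * ENNReal.ofReal ε :=
    fun d Θ hΘ hΘd => measure_pi_setOf_mem_Icc_le μ hΘ hΘd (withDensity_Icc_le (hgbound d) · ε)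
  have hθ : ∀ d k, Measurable (θ d k) ∧ ∀ x t, θ d k (Function.update x d t) = θ d k x :=
    fun d k => ⟨(measurable_minRestCost ..).sub (measurable_minRestCost ..),
      fun x t => by simp only [θ, costGap, minRestCost_update]⟩
  calc _ ≤ Measure.pi μ (⋃ d, {c | c d ∈ Set.Icc (θ d 0 c) (θ d 0 c + ε)} ∪
          {c | c d ∈ Set.Icc (θ d (cap d - 1) c - ε) (θ d (cap d - 1) c - ε + ε)}) := by
        refine measure_mono fun c ⟨fs, hfs, hopt, _, _, _, hc, hcost⟩ => ?_
        obtain ⟨f, h, d, hf, hh, hhcost, hd⟩ :=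
          IsMinCostFlow.exists_unit_step_off_bound ⟨hfs, hopt⟩ hc hcost
        exact Set.mem_iUnion.2 ⟨d, mem_Icc_costGap hf hh hhcost hd⟩
    _ ≤ ∑ _d : E, (ENNReal.ofReal φ * ENNReal.ofReal ε + ENNReal.ofReal φ * ENNReal.ofReal ε) :=
        (measure_iUnion_fintype_le _ _).trans <| sum_le_sum fun d _ =>
          (measure_union_le _ _).trans <| add_le_add (hslab d _ (hθ d 0).1 (hθ d 0).2)
            (hslab d _ ((hθ d _).1.sub_const ε) fun x t => by rw [(hθ d _).2])
    _ = ENNReal.ofReal (2 * ε * φ * (Fintype.card E)) := by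
        rw [sum_const, card_univ, nsmul_eq_mul, show 2 * ε * φ * Fintype.card E =
          φ * (2 * ε * Fintype.card E) by ring, ENNReal.ofReal_mul' (by positivity),
          ENNReal.ofReal_mul (by positivity), ENNReal.ofReal_mul zero_le_two,
          ENNReal.ofReal_natCast, ENNReal.ofReal_ofNat]
        ring

/-- If the edge costs are independent random variables with values in `[0,1]` whose
densities are bounded by `φ`, and at least two feasible integer flows exist, then for
every `ε > 0` the probability that some directed cycle in the residual network of a
min-cost flow `f*` has cost at most `ε` (i.e. that `Δ ≤ ε`) is at most `2 ε φ m`. -/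
theorem residual_cycle_prob
    {V E : Type} [Fintype V] [Fintype E] [DecidableEq V]
    (src tgt : E → V) (cap : E → ℕ) (bdg : V → ℤ)
    (φ ε : ℝ) (hε : 0 < ε)
    (g : E → ℝ → ENNReal)
    (hgmeas : ∀ e, Measurable (g e))
    (hgbound : ∀ e x, g e x ≤ ENNReal.ofReal φ)
    (hgsupp : ∀ e x, x ∉ Set.Icc (0 : ℝ) 1 → g e x = 0)
    (hgprob : ∀ e, IsProbabilityMeasure ((volume : Measure ℝ).withDensity (g e)))
    (htwo : ∃ f₁ f₂ : E → ℤ, IsFlow src tgt cap bdg f₁ ∧ IsFlow src tgt cap bdg f₂ ∧ f₁ ≠ f₂) :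
    Measure.pi (fun e : E => (volume : Measure ℝ).withDensity (g e))
      {c : E → ℝ | ∃ fstar : E → ℤ,
        IsFlow src tgt cap bdg fstar ∧
        (∀ f, IsFlow src tgt cap bdg f → flowCost c fstar ≤ flowCost c f) ∧
        ∃ (len : ℕ) (vtx : Fin len → V) (arc : Fin len → E × Bool),
          IsResidualCycle src tgt cap fstar vtx arc ∧ cycleCost c arc ≤ ε} ≤
      ENNReal.ofReal (2 * ε * φ * (Fintype.card E)) :=
  residual_cycle_prob_general src tgt cap bdg φ ε hε g hgbound hgprob
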